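/- arXiv:1712.05743 — 4 statements merged into one kernel-verified Lean document; each statement's English description precedes it below -/
import Mathlib

section
/- Let μ and ν be probability measures on Ω = {-1,+1}^n, ν with full support, and let P be the irreducible Glauber dynamics kernel of μ. Let f : Ω → ℝ and let h solve the Poisson equation h − Ph = f − E_μ f. Then |E_μ f − E_ν f| ≤ E_ν [ (1/n) Σ_{i=1}^n |Δ_i(h)(x)| · ‖μ_i(·|x^{(∼i)}) − ν_i(·|x^{(∼i)})‖_TV ]. -/
/-!
The Glauber kernel `Q` of `ν` leaves `ν` invariant, because each single-site heat-bath update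
does: averaging over the two values of coordinate `i` weighted by `ν` is exactly what the update
computes. Hence, by the Poisson equation,
`E_ν f - E_μ f = E_ν (h - P h) = E_ν (Q h - P h)`, and `Q h - P h` at `x` is the average over `i`
of `(ν_i(+|x) - μ_i(+|x)) · Δ_i h (x)`; the bound follows from the triangle inequality.
-/

open Finset

/-- Spin value ±1 of a Boolean coordinate. -/
noncomputable def spin (b : Bool) : ℝ := if b then 1 else -1

/-- Configuration `x` with coordinate `i` set to `+1`. -/
noncomputable def up {n : ℕ} (x : Fin n → Bool) (i : Fin n) : Fin n → Bool :=
  Function.update x i true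

/-- Configuration `x` with coordinate `i` set to `-1`. -/
noncomputable def dn {n : ℕ} (x : Fin n → Bool) (i : Fin n) : Fin n → Bool :=
  Function.update x i false

/-- Conditional probability `μ_i(1 | x^{(∼i)})`. -/
noncomputable def condProb {n : ℕ} (μ : (Fin n → Bool) → ℝ) (x : Fin n → Bool) (i : Fin n) : ℝ :=
  μ (up x i) / (μ (up x i) + μ (dn x i))

/-- Glauber dynamics kernel of `μ`, acting on functions. -/
noncomputable def glauberOp {n : ℕ} (μ : (Fin n → Bool) → ℝ) (h : (Fin n → Bool) → ℝ)
    (x : Fin n → Bool) : ℝ :=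
  (1 / n) * ∑ i, (condProb μ x i * h (up x i) + (1 - condProb μ x i) * h (dn x i))

/-- Discrete derivative `Δ_i(h)(x) = h(x^{(i,+)}) - h(x^{(i,-)})`. -/
noncomputable def disc {n : ℕ} (i : Fin n) (h : (Fin n → Bool) → ℝ) (x : Fin n → Bool) : ℝ :=
  h (up x i) - h (dn x i)

/-- Expectation of `f` under the probability mass function `μ`. -/
noncomputable def expect {n : ℕ} (μ : (Fin n → Bool) → ℝ) (f : (Fin n → Bool) → ℝ) : ℝ :=
  ∑ x, μ x * f x

variable {n : ℕ}

section Configurations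

variable (x : Fin n → Bool) (i : Fin n)

@[simp] lemma up_up : up (up x i) i = up x i := Function.update_idem _ _ _

@[simp] lemma up_dn : up (dn x i) i = up x i := Function.update_idem _ _ _

@[simp] lemma dn_up : dn (up x i) i = dn x i := Function.update_idem _ _ _

@[simp] lemma dn_dn : dn (dn x i) i = dn x i := Function.update_idem _ _ _

def flipAt (i : Fin n) (x : Fin n → Bool) : Fin n → Bool := Function.update x i (!x i)

lemma flipAt_involutive : Function.Involutive (flipAt i) := by
  intro x
  ext j
  by_cases hj : j = i
  · subst hj; simp [flipAt]
  · simp [flipAt, Function.update_of_ne hj]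

lemma add_apply_flipAt {M : Type*} [AddCommMagma M] (G : (Fin n → Bool) → M) :
    G x + G (flipAt i x) = G (up x i) + G (dn x i) := by
  cases hx : x i
  · have hdn : dn x i = x := by simp [dn, ← hx]
    rw [hdn, add_comm, flipAt, hx]; rfl
  · have hup : up x i = x := by simp [up, ← hx]
    rw [hup, flipAt, hx]; rfl

lemma sum_up_add_dn (G : (Fin n → Bool) → ℝ) :
    ∑ x, (G (up x i) + G (dn x i)) = 2 * ∑ x, G x := by
  have hflip : ∑ x, G (flipAt i x) = ∑ x, G x :=
    Fintype.sum_equiv (flipAt_involutive i).toPerm _ _ fun _ => rfl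
  simp only [← add_apply_flipAt, sum_add_distrib, hflip]
  ring

end Configurations

/-- The heat-bath update of coordinate `i`: resample `x i` from `μ_i(· | x^{(∼i)})`. -/
noncomputable def siteOp (μ : (Fin n → Bool) → ℝ) (i : Fin n) (h : (Fin n → Bool) → ℝ)
    (x : Fin n → Bool) : ℝ :=
  condProb μ x i * h (up x i) + (1 - condProb μ x i) * h (dn x i)

lemma glauberOp_eq_average_siteOp (μ h : (Fin n → Bool) → ℝ) (x : Fin n → Bool) :
    glauberOp μ h x = (1 / n) * ∑ i, siteOp μ i h x := rfl

@[simp] lemma siteOp_up (μ h : (Fin n → Bool) → ℝ) (i : Fin n) (x : Fin n → Bool) :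
    siteOp μ i h (up x i) = siteOp μ i h x := by
  simp [siteOp, condProb]

@[simp] lemma siteOp_dn (μ h : (Fin n → Bool) → ℝ) (i : Fin n) (x : Fin n → Bool) :
    siteOp μ i h (dn x i) = siteOp μ i h x := by
  simp [siteOp, condProb]

lemma pair_mul_siteOp {ν : (Fin n → Bool) → ℝ} {x : Fin n → Bool} {i : Fin n}
    (hν : ν (up x i) + ν (dn x i) ≠ 0) (h : (Fin n → Bool) → ℝ) :
    (ν (up x i) + ν (dn x i)) * siteOp ν i h x
      = ν (up x i) * h (up x i) + ν (dn x i) * h (dn x i) := by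
  simp only [siteOp, condProb]
  field_simp
  ring

section Expectation

variable (ν : (Fin n → Bool) → ℝ)

lemma expect_siteOp_self (hν : ∀ x, 0 < ν x) (i : Fin n) (h : (Fin n → Bool) → ℝ) :
    expect ν (siteOp ν i h) = expect ν h := by
  have hpair : ∀ x, ν (up x i) + ν (dn x i) ≠ 0 := fun x =>
    (add_pos (hν _) (hν _)).ne'
  have key := sum_up_add_dn i fun x => ν x * siteOp ν i h x
  simp only [siteOp_up, siteOp_dn, ← add_mul, pair_mul_siteOp (hpair _)] at key
  rw [sum_up_add_dn i fun x => ν x * h x] at key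
  simp only [_root_.expect]
  linarith

lemma expect_glauberOp_self (hn : 0 < n) (hν : ∀ x, 0 < ν x) (h : (Fin n → Bool) → ℝ) :
    expect ν (glauberOp ν h) = expect ν h := by
  have hn' : (n : ℝ) ≠ 0 := by positivity
  calc expect ν (glauberOp ν h) = (1 / n) * ∑ i : Fin n, expect ν (siteOp ν i h) := by
        simp only [_root_.expect, glauberOp_eq_average_siteOp, mul_sum]
        rw [sum_comm]
        exact sum_congr rfl fun _ _ => sum_congr rfl fun _ _ => by ring
    _ = expect ν h := by
        simp only [expect_siteOp_self ν hν, sum_const, card_univ, Fintype.card_fin,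
          nsmul_eq_mul]
        field_simp

lemma expect_sub (f g : (Fin n → Bool) → ℝ) :
    expect ν (fun x => f x - g x) = expect ν f - expect ν g := by
  simp only [_root_.expect, mul_sub, sum_sub_distrib]

lemma expect_sub_const (hν : ∑ x, ν x = 1) (f : (Fin n → Bool) → ℝ) (c : ℝ) :
    expect ν (fun x => f x - c) = expect ν f - c := by
  simp only [_root_.expect, mul_sub, sum_sub_distrib, ← sum_mul, hν, one_mul]

lemma abs_expect_le_expect (hν : ∀ x, 0 ≤ ν x) {f g : (Fin n → Bool) → ℝ}
    (hfg : ∀ x, |f x| ≤ g x) : |expect ν f| ≤ expect ν g :=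
  (abs_sum_le_sum_abs _ _).trans <| sum_le_sum fun x _ => by
    rw [abs_mul, abs_of_nonneg (hν x)]
    exact mul_le_mul_of_nonneg_left (hfg x) (hν x)

end Expectation

lemma glauberOp_sub_glauberOp (μ ν h : (Fin n → Bool) → ℝ) (x : Fin n → Bool) :
    glauberOp ν h x - glauberOp μ h x
      = (1 / n) * ∑ i, (condProb ν x i - condProb μ x i) * disc i h x := by
  simp only [glauberOp, ← mul_sub, ← sum_sub_distrib, disc]
  congr 1
  exact sum_congr rfl fun _ _ => by ring

lemma abs_glauberOp_sub_glauberOp_le (μ ν h : (Fin n → Bool) → ℝ) (x : Fin n → Bool) :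
    |glauberOp ν h x - glauberOp μ h x|
      ≤ (1 / n) * ∑ i, |disc i h x| * |condProb μ x i - condProb ν x i| := by
  rw [glauberOp_sub_glauberOp, abs_mul, abs_of_nonneg (by positivity)]
  gcongr
  refine (abs_sum_le_sum_abs _ _).trans_eq (sum_congr rfl fun i _ => ?_)
  rw [abs_mul, abs_sub_comm, mul_comm]

theorem stmt1_general {n : ℕ} (hn : 0 < n) (μ ν : (Fin n → Bool) → ℝ)
    (hνpos : ∀ x, 0 < ν x)
    (hνsum : ∑ x, ν x = 1)
    (f h : (Fin n → Bool) → ℝ)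
    (hPoisson : ∀ x, h x - glauberOp μ h x = f x - expect μ f) :
    |expect μ f - expect ν f|
      ≤ expect ν (fun x => (1 / n) * ∑ i, |disc i h x| * |condProb μ x i - condProb ν x i|) := by
  have hdiff : expect ν f - expect μ f
      = expect ν (fun x => glauberOp ν h x - glauberOp μ h x) :=
    calc expect ν f - expect μ f = expect ν (fun x => f x - expect μ f) :=
          (expect_sub_const ν hνsum f _).symm
      _ = expect ν (fun x => h x - glauberOp μ h x) := by simp only [hPoisson]
      _ = expect ν (fun x => glauberOp ν h x - glauberOp μ h x) := by
          rw [expect_sub, expect_sub, expect_glauberOp_self ν hn hνpos]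
  rw [abs_sub_comm, hdiff]
  exact abs_expect_le_expect ν (fun x => (hνpos x).le) (abs_glauberOp_sub_glauberOp_le μ ν h)

theorem stmt1 {n : ℕ} (hn : 0 < n) (μ ν : (Fin n → Bool) → ℝ)
    (hμpos : ∀ x, 0 < μ x) (hνpos : ∀ x, 0 < ν x)
    (hμsum : ∑ x, μ x = 1) (hνsum : ∑ x, ν x = 1)
    (f h : (Fin n → Bool) → ℝ)
    (hPoisson : ∀ x, h x - glauberOp μ h x = f x - expect μ f) :
    |expect μ f - expect ν f|
      ≤ expect ν (fun x => (1 / n) * ∑ i, |disc i h x| * |condProb μ x i - condProb ν x i|) :=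
  stmt1_general hn μ ν hνpos hνsum f h hPoisson
end

section
/- Let P be a finite-state irreducible Markov kernel on Ω with stationary distribution μ, and let f : Ω → ℝ. Suppose P is α-contractive for some α ∈ [0,1), i.e., there is a coupling of two P-chains (X_t), (Y_t) such that E[d_H(X_t, Y_t) | X_0 = x, Y_0 = y] ≤ α^t d_H(x,y) for all t and all x,y. If f is L-Lipschitz with respect to the Hamming metric, then the principal solution h(x) = Σ_{t≥0} E[f(X_t) − E_μ f | X_0 = x] of the Poisson equation h − Ph = f − E_μ f satisfies |Δ_i(h)(x)| ≤ L/(1−α) for every coordinate i and every x ∈ Ω. -/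
open Finset

/-- Action of a Markov kernel on functions: `(Pf)(x) = Σ_y P(x,y) f(y)`. -/
noncomputable def act {n : ℕ} (P : (Fin n → Bool) → (Fin n → Bool) → ℝ)
    (f : (Fin n → Bool) → ℝ) (x : Fin n → Bool) : ℝ :=
  ∑ y, P x y * f y

/-- Action of a coupled (pair) Markov kernel on functions of pairs. -/
noncomputable def act2 {n : ℕ}
    (K : ((Fin n → Bool) × (Fin n → Bool)) → ((Fin n → Bool) × (Fin n → Bool)) → ℝ)
    (f : ((Fin n → Bool) × (Fin n → Bool)) → ℝ)
    (p : (Fin n → Bool) × (Fin n → Bool)) : ℝ :=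
  ∑ q, K p q * f q

/-- Hamming distance between two configurations. -/
noncomputable def hamming {n : ℕ} (x y : Fin n → Bool) : ℝ :=
  ∑ i, if x i = y i then 0 else 1

/-! Under the coupling, `Pᵗ f x - Pᵗ f y` is the expectation of `f Xₜ - f Yₜ`, hence at most
`L · E d_H(Xₜ, Yₜ) ≤ L αᵗ d_H(x, y)`. Stationarity writes `Pᵗ f z - E_μ f` as a `μ`-average of
such differences, so the series defining `h` converges geometrically, and since `x^{(i,+)}` and
`x^{(i,-)}` are at Hamming distance one, `|Δᵢ h (x)| ≤ Σₜ L αᵗ = L / (1 - α)`. -/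

section PoissonSolution

variable {n : ℕ}

theorem hamming_up_dn (x : Fin n → Bool) (i : Fin n) : hamming (up x i) (dn x i) = 1 := by
  unfold hamming up dn
  rw [Finset.sum_eq_single i]
  · simp
  · intro j _ hj
    simp [Function.update_of_ne hj]
  · simp

section Coupling

variable {P : (Fin n → Bool) → (Fin n → Bool) → ℝ}
  {K : ((Fin n → Bool) × (Fin n → Bool)) → ((Fin n → Bool) × (Fin n → Bool)) → ℝ}

theorem act2_monotone (hK : ∀ p q, 0 ≤ K p q) : Monotone (act2 K) :=
  fun _ _ hFG p => Finset.sum_le_sum fun q _ => mul_le_mul_of_nonneg_left (hFG q) (hK p q)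

theorem act2_commute_smul (c : ℝ) : Function.Commute (act2 K) (c • ·) := by
  intro F
  funext p
  simp only [act2, Pi.smul_apply, smul_eq_mul, Finset.mul_sum]
  exact Finset.sum_congr rfl fun q _ => by ring

theorem semiconj_act2_of_coupling (hK1 : ∀ p c, ∑ d, K p (c, d) = P p.1 c)
    (hK2 : ∀ p d, ∑ c, K p (c, d) = P p.2 d) :
    Function.Semiconj (fun g q => g q.1 - g q.2) (act P) (act2 K) := by
  intro g
  funext p
  have hfst : ∑ q, K p q * g q.1 = act P g p.1 := by
    simp only [act, Fintype.sum_prod_type, ← Finset.sum_mul, hK1]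
  have hsnd : ∑ q, K p q * g q.2 = act P g p.2 := by
    simp only [act, Fintype.sum_prod_type, Finset.sum_comm (γ := Fin n → Bool),
      ← Finset.sum_mul, hK2]
  simp only [act2, mul_sub, Finset.sum_sub_distrib, hfst, hsnd]

theorem abs_iterate_act_sub_le (hK : ∀ p q, 0 ≤ K p q)
    (hK1 : ∀ p c, ∑ d, K p (c, d) = P p.1 c) (hK2 : ∀ p d, ∑ c, K p (c, d) = P p.2 d)
    {α : ℝ} (hcontr : ∀ (t : ℕ) (x y : Fin n → Bool),
      (act2 K)^[t] (fun q => hamming q.1 q.2) (x, y) ≤ α ^ t * hamming x y)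
    {L : ℝ} (hL : 0 ≤ L) {f : (Fin n → Bool) → ℝ}
    (hf : ∀ x y, |f x - f y| ≤ L * hamming x y) (t : ℕ) (x y : Fin n → Bool) :
    |(act P)^[t] f x - (act P)^[t] f y| ≤ L * α ^ t * hamming x y := by
  have hdiff := congrFun ((semiconj_act2_of_coupling hK1 hK2).iterate_right t f) (x, y)
  have hscale (c : ℝ) := congrFun ((act2_commute_smul (K := K) c).iterate_left t
    (fun q => hamming q.1 q.2)) (x, y)
  simp only [Pi.smul_apply, smul_eq_mul] at hdiff hscale
  have hcontrL := mul_le_mul_of_nonneg_left (hcontr t x y) hL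
  have hupper := (act2_monotone hK).iterate t
    (show (fun q => f q.1 - f q.2) ≤ L • fun q => hamming q.1 q.2 from
      fun q => (abs_le.mp (hf q.1 q.2)).2) (x, y)
  have hlower := (act2_monotone hK).iterate t
    (show (-L) • (fun q => hamming q.1 q.2) ≤ fun q => f q.1 - f q.2 from
      fun q => by simpa using (abs_le.mp (hf q.1 q.2)).1) (x, y)
  rw [hscale] at hupper hlower
  rw [hdiff, abs_le]
  constructor <;> linarith

end Coupling

section Stationarity

variable {P : (Fin n → Bool) → (Fin n → Bool) → ℝ} {μ : (Fin n → Bool) → ℝ}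

theorem expect_act (hstat : ∀ y, ∑ x, μ x * P x y = μ y) (g : (Fin n → Bool) → ℝ) :
    expect μ (act P g) = expect μ g := by
  simp only [_root_.expect, act, Finset.mul_sum, ← mul_assoc]
  rw [Finset.sum_comm]
  simp only [← Finset.sum_mul, hstat]

theorem expect_iterate_act (hstat : ∀ y, ∑ x, μ x * P x y = μ y) (g : (Fin n → Bool) → ℝ)
    (t : ℕ) : expect μ ((act P)^[t] g) = expect μ g := by
  induction t with
  | zero => rfl
  | succ t ih => rw [Function.iterate_succ_apply', expect_act hstat, ih]

theorem iterate_act_sub_expect (hμsum : ∑ x, μ x = 1) (hstat : ∀ y, ∑ x, μ x * P x y = μ y)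
    (g : (Fin n → Bool) → ℝ) (t : ℕ) (z : Fin n → Bool) :
    (act P)^[t] g z - expect μ g = ∑ y, μ y * ((act P)^[t] g z - (act P)^[t] g y) := by
  rw [← expect_iterate_act hstat g t, _root_.expect]
  simp only [mul_sub, Finset.sum_sub_distrib, ← Finset.sum_mul, hμsum, one_mul]

theorem summable_iterate_act_sub_expect (hμsum : ∑ x, μ x = 1)
    (hstat : ∀ y, ∑ x, μ x * P x y = μ y) {α : ℝ} (hα0 : 0 ≤ α) (hα1 : α < 1) {C : ℝ}
    {g : (Fin n → Bool) → ℝ}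
    (hdecay : ∀ (t : ℕ) (x y : Fin n → Bool),
      |(act P)^[t] g x - (act P)^[t] g y| ≤ C * α ^ t * hamming x y)
    (z : Fin n → Bool) :
    Summable fun t : ℕ => (act P)^[t] g z - expect μ g := by
  refine Summable.of_norm_bounded
    ((summable_geometric_of_lt_one hα0 hα1).mul_left (∑ y, |μ y| * (C * hamming z y)))
    fun t => ?_
  rw [Real.norm_eq_abs, iterate_act_sub_expect hμsum hstat, Finset.sum_mul]
  refine (Finset.abs_sum_le_sum_abs _ _).trans (Finset.sum_le_sum fun y _ => ?_)
  rw [abs_mul, mul_assoc]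
  gcongr
  linarith [hdecay t z y]

theorem abs_disc_poisson_le (hμsum : ∑ x, μ x = 1) (hstat : ∀ y, ∑ x, μ x * P x y = μ y)
    {α : ℝ} (hα0 : 0 ≤ α) (hα1 : α < 1) {L : ℝ} {f : (Fin n → Bool) → ℝ}
    (hdecay : ∀ (t : ℕ) (x y : Fin n → Bool),
      |(act P)^[t] f x - (act P)^[t] f y| ≤ L * α ^ t * hamming x y)
    (i : Fin n) (x : Fin n → Bool) :
    |disc i (fun z => ∑' t : ℕ, ((act P)^[t] f z - expect μ f)) x| ≤ L / (1 - α) := by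
  have hsum := summable_iterate_act_sub_expect hμsum hstat hα0 hα1 hdecay
  rw [disc, ← (hsum _).tsum_sub (hsum _), div_eq_mul_inv, ← Real.norm_eq_abs]
  refine tsum_of_norm_bounded ((hasSum_geometric_of_lt_one hα0 hα1).mul_left L) fun t => ?_
  rw [Real.norm_eq_abs, sub_sub_sub_cancel_right]
  simpa [hamming_up_dn] using hdecay t (up x i) (dn x i)

end Stationarity

end PoissonSolution

theorem stmt2_general {n : ℕ}
    (P : (Fin n → Bool) → (Fin n → Bool) → ℝ)
    (μ : (Fin n → Bool) → ℝ) (hμsum : ∑ x, μ x = 1)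
    (hstat : ∀ y, ∑ x, μ x * P x y = μ y)
    (α : ℝ) (hα : α ∈ Set.Ico (0 : ℝ) 1)
    (K : ((Fin n → Bool) × (Fin n → Bool)) → ((Fin n → Bool) × (Fin n → Bool)) → ℝ)
    (hKrows : ∀ p, (∀ q, 0 ≤ K p q) ∧ ∑ q, K p q = 1)
    (hK1 : ∀ p c, ∑ d, K p (c, d) = P p.1 c)
    (hK2 : ∀ p d, ∑ c, K p (c, d) = P p.2 d)
    (hcontr : ∀ (t : ℕ) (x y : Fin n → Bool),
      (act2 K)^[t] (fun q => hamming q.1 q.2) (x, y) ≤ α ^ t * hamming x y)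
    (L : ℝ) (f : (Fin n → Bool) → ℝ)
    (hf : ∀ x y, |f x - f y| ≤ L * hamming x y) :
    ∀ (i : Fin n) (x : Fin n → Bool),
      |disc i (fun z => ∑' t : ℕ, ((act P)^[t] f z - expect μ f)) x| ≤ L / (1 - α) := by
  intro i x
  have hL : 0 ≤ L := by
    simpa [hamming_up_dn] using (abs_nonneg _).trans (hf (up x i) (dn x i))
  exact abs_disc_poisson_le hμsum hstat hα.1 hα.2
    (abs_iterate_act_sub_le (fun p => (hKrows p).1) hK1 hK2 hcontr hL hf) i x

theorem stmt2 {n : ℕ} (hn : 0 < n)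
    (P : (Fin n → Bool) → (Fin n → Bool) → ℝ)
    (hProws : ∀ x, (∀ y, 0 ≤ P x y) ∧ ∑ y, P x y = 1)
    (hirr : ∀ x y : Fin n → Bool,
      ∃ t : ℕ, 0 < (act P)^[t] (fun z => if z = y then (1 : ℝ) else 0) x)
    (μ : (Fin n → Bool) → ℝ) (hμnn : ∀ x, 0 ≤ μ x) (hμsum : ∑ x, μ x = 1)
    (hstat : ∀ y, ∑ x, μ x * P x y = μ y)
    (α : ℝ) (hα : α ∈ Set.Ico (0 : ℝ) 1)
    (K : ((Fin n → Bool) × (Fin n → Bool)) → ((Fin n → Bool) × (Fin n → Bool)) → ℝ)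
    (hKrows : ∀ p, (∀ q, 0 ≤ K p q) ∧ ∑ q, K p q = 1)
    (hK1 : ∀ p c, ∑ d, K p (c, d) = P p.1 c)
    (hK2 : ∀ p d, ∑ c, K p (c, d) = P p.2 d)
    (hcontr : ∀ (t : ℕ) (x y : Fin n → Bool),
      (act2 K)^[t] (fun q => hamming q.1 q.2) (x, y) ≤ α ^ t * hamming x y)
    (L : ℝ) (f : (Fin n → Bool) → ℝ)
    (hf : ∀ x y, |f x - f y| ≤ L * hamming x y) :
    ∀ (i : Fin n) (x : Fin n → Bool),
      |disc i (fun z => ∑' t : ℕ, ((act P)^[t] f z - expect μ f)) x| ≤ L / (1 - α) :=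
  stmt2_general P μ hμsum hstat α hα K hKrows hK1 hK2 hcontr L f hf
end

section
/- Let L and M be symmetric n×n real matrices with zero diagonal, and let π_L, π_M be the Ising models with interaction matrices L and M. Let f_1,…,f_n : Ω → ℝ and v_f(x) = (f_1(x),…,f_n(x))^T. Then for every x ∈ Ω: (1/n) Σ_{i=1}^n |f_i(x)| · ‖(π_L)_i(·|x^{(∼i)}) − (π_M)_i(·|x^{(∼i)})‖_TV ≤ ‖L − M‖_2 · ‖v_f(x)‖_2 / (2√n). -/
open Finset
open scoped Matrix

/-- The ±1 spin vector associated to a Boolean configuration. -/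
noncomputable def sigmaVec {n : ℕ} (x : Fin n → Bool) : Fin n → ℝ := fun i => spin (x i)

/-- The Ising model with interaction matrix `J`: `π_J(x) ∝ exp((1/2) xᵀ J x)`. -/
noncomputable def ising {n : ℕ} (J : Matrix (Fin n) (Fin n) ℝ) (x : Fin n → Bool) : ℝ :=
  Real.exp ((1 / 2) * (sigmaVec x ⬝ᵥ J.mulVec (sigmaVec x))) /
    ∑ y, Real.exp ((1 / 2) * (sigmaVec y ⬝ᵥ J.mulVec (sigmaVec y)))

/-- Spectral (ℓ²-operator) norm of a real square matrix. -/
noncomputable def specNorm {n : ℕ} (M : Matrix (Fin n) (Fin n) ℝ) : ℝ :=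
  ‖(Matrix.toEuclideanCLM (𝕜 := ℝ) M : EuclideanSpace ℝ (Fin n) →L[ℝ] EuclideanSpace ℝ (Fin n))‖


/-! The conditional law of spin `i` under `π_J` is `sigmoid (2 (J σ)ᵢ)`, because flipping `σᵢ` changes
the energy `σᵀJσ / 2` by `2 (J σ)ᵢ` when `J` is symmetric with zero diagonal. The sigmoid is
`1/4`-Lipschitz, so the `i`-th total-variation term is at most `|((L - M) σ)ᵢ| / 2`; Cauchy–Schwarz,
`‖(L - M) σ‖₂ ≤ ‖L - M‖₂ ‖σ‖₂` and `‖σ‖₂ = √n` finish the proof. -/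

namespace Real

lemma sigmoid_mul_one_sub_sigmoid_le (x : ℝ) : sigmoid x * (1 - sigmoid x) ≤ 4⁻¹ := by
  nlinarith [sq_nonneg (sigmoid x - 2⁻¹)]

lemma lipschitzWith_sigmoid : LipschitzWith 4⁻¹ sigmoid := by
  refine lipschitzWith_of_nnnorm_deriv_le (fun x => differentiableAt_sigmoid) fun x => ?_
  rw [← NNReal.coe_le_coe, coe_nnnorm, deriv_sigmoid, norm_of_nonneg
    (mul_nonneg (sigmoid_nonneg x) (sub_nonneg.mpr (sigmoid_le_one x)))]
  exact_mod_cast sigmoid_mul_one_sub_sigmoid_le x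

lemma exp_div_exp_add_exp (a b : ℝ) : exp a / (exp a + exp b) = sigmoid (a - b) := by
  rw [sigmoid_def, neg_sub, exp_sub]
  field_simp

end Real

namespace Matrix

variable {ι : Type*} [Fintype ι] [DecidableEq ι]

lemma update_dotProduct_mulVec_update {J : Matrix ι ι ℝ} (hs : J.IsSymm) (i : ι)
    (hd : J i i = 0) (v : ι → ℝ) (a : ℝ) :
    Function.update v i a ⬝ᵥ J *ᵥ Function.update v i a =
      Function.update v i 0 ⬝ᵥ J *ᵥ Function.update v i 0 + 2 * a * (J *ᵥ v) i := by
  set w := Function.update v i 0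
  have hupd : Function.update v i a = w + Pi.single i a := by
    ext j; rcases eq_or_ne j i with rfl | h <;> simp [w, *]
  have hfield : (J *ᵥ w) i = (J *ᵥ v) i := by
    simp only [mulVec, dotProduct]
    refine Finset.sum_congr rfl fun k _ => ?_
    rcases eq_or_ne k i with rfl | h <;> simp [w, *]
  have hsymm : w ⬝ᵥ J *ᵥ Pi.single i a = a * (J *ᵥ w) i := by
    rw [dotProduct_mulVec, ← mulVec_transpose, hs.eq, dotProduct_single, mul_comm]
  rw [hupd, mulVec_add, dotProduct_add, add_dotProduct, add_dotProduct, hsymm, single_dotProduct,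
    single_dotProduct, mulVec_single, hfield]
  simp [hd]
  ring

end Matrix

lemma sigmaVec_update {n : ℕ} (x : Fin n → Bool) (i : Fin n) (b : Bool) :
    sigmaVec (Function.update x i b) = Function.update (sigmaVec x) i (spin b) := by
  ext j; rcases eq_or_ne j i with rfl | h <;> simp [sigmaVec, *]

lemma sum_sq_sigmaVec {n : ℕ} (x : Fin n → Bool) : ∑ i, sigmaVec x i ^ 2 = n := by
  simp [sigmaVec, spin, apply_ite (· ^ 2)]

lemma condProb_exp_div {n : ℕ} (H : (Fin n → Bool) → ℝ) {Z : ℝ} (hZ : Z ≠ 0)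
    (x : Fin n → Bool) (i : Fin n) :
    condProb (fun y => Real.exp (H y) / Z) x i = Real.sigmoid (H (up x i) - H (dn x i)) := by
  rw [condProb, ← add_div, div_div_div_cancel_right₀ hZ, Real.exp_div_exp_add_exp]

lemma condProb_ising {n : ℕ} {J : Matrix (Fin n) (Fin n) ℝ} (hs : J.IsSymm)
    (hd : ∀ i, J i i = 0) (x : Fin n → Bool) (i : Fin n) :
    condProb (ising J) x i = Real.sigmoid (2 * (J *ᵥ sigmaVec x) i) := by
  have hZ : ∑ y, Real.exp ((1 / 2) * (sigmaVec y ⬝ᵥ J *ᵥ sigmaVec y)) ≠ 0 :=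
    (Finset.sum_pos (fun y _ => Real.exp_pos _) ⟨x, Finset.mem_univ x⟩).ne'
  unfold ising
  rw [condProb_exp_div _ hZ, up, dn, sigmaVec_update, sigmaVec_update,
    J.update_dotProduct_mulVec_update hs i (hd i) _ (spin true),
    J.update_dotProduct_mulVec_update hs i (hd i) _ (spin false)]
  norm_num [spin]
  ring_nf

lemma abs_condProb_ising_sub_le {n : ℕ} {L M : Matrix (Fin n) (Fin n) ℝ}
    (hLsymm : L.IsSymm) (hLdiag : ∀ i, L i i = 0) (hMsymm : M.IsSymm) (hMdiag : ∀ i, M i i = 0)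
    (x : Fin n → Bool) (i : Fin n) :
    |condProb (ising L) x i - condProb (ising M) x i| ≤ |((L - M) *ᵥ sigmaVec x) i| / 2 := by
  rw [condProb_ising hLsymm hLdiag, condProb_ising hMsymm hMdiag, Matrix.sub_mulVec, Pi.sub_apply]
  calc _ ≤ 4⁻¹ * |2 * (L *ᵥ sigmaVec x) i - 2 * (M *ᵥ sigmaVec x) i| := by
        simpa only [Real.dist_eq, NNReal.coe_inv, NNReal.coe_ofNat] using Real.lipschitzWith_sigmoid.dist_le_mul _ _
    _ = _ := by rw [← mul_sub, abs_mul, abs_two]; ring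

lemma sqrt_sum_sq_mulVec_le {n : ℕ} (A : Matrix (Fin n) (Fin n) ℝ) (v : Fin n → ℝ) :
    √(∑ i, (A *ᵥ v) i ^ 2) ≤ specNorm A * √(∑ i, v i ^ 2) := by
  have h := (Matrix.toEuclideanCLM (𝕜 := ℝ) A).le_opNorm (WithLp.toLp 2 v)
  rw [Matrix.toEuclideanCLM_toLp] at h
  simpa [EuclideanSpace.norm_eq, specNorm] using h

theorem stmt4_general {n : ℕ} (L M : Matrix (Fin n) (Fin n) ℝ)
    (hLsymm : L.IsSymm) (hLdiag : ∀ i, L i i = 0)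
    (hMsymm : M.IsSymm) (hMdiag : ∀ i, M i i = 0)
    (f : Fin n → (Fin n → Bool) → ℝ) (x : Fin n → Bool) :
    (1 / n) * ∑ i, |f i x| * |condProb (ising L) x i - condProb (ising M) x i|
      ≤ specNorm (L - M) * Real.sqrt (∑ i, (f i x) ^ 2) / (2 * Real.sqrt n) := by
  set w := (L - M) *ᵥ sigmaVec x
  have hcs := Real.sum_mul_le_sqrt_mul_sqrt Finset.univ (fun i => |f i x|) (fun i => |w i|)
  simp only [sq_abs] at hcs
  have hw : √(∑ i, w i ^ 2) ≤ specNorm (L - M) * √n := by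
    simpa only [sum_sq_sigmaVec] using sqrt_sum_sq_mulVec_le (L - M) (sigmaVec x)
  calc (1 / n) * ∑ i, |f i x| * |condProb (ising L) x i - condProb (ising M) x i|
      ≤ (1 / n) * ∑ i, |f i x| * (|w i| / 2) := by
        gcongr with i
        exact abs_condProb_ising_sub_le hLsymm hLdiag hMsymm hMdiag x i
    _ ≤ (1 / n) * (√(∑ i, f i x ^ 2) * √(∑ i, w i ^ 2) / 2) := by
        simp only [← mul_div_assoc, ← Finset.sum_div]
        gcongr
    _ ≤ (1 / n) * (√(∑ i, f i x ^ 2) * (specNorm (L - M) * √n) / 2) := by gcongr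
    _ = specNorm (L - M) * √(∑ i, f i x ^ 2) / (2 * √n) := by
        rw [mul_comm 2, ← div_div, div_eq_mul_one_div _ √(n : ℝ), ← Real.sqrt_div_self']
        ring

theorem stmt4 {n : ℕ} (hn : 0 < n) (L M : Matrix (Fin n) (Fin n) ℝ)
    (hLsymm : L.IsSymm) (hLdiag : ∀ i, L i i = 0)
    (hMsymm : M.IsSymm) (hMdiag : ∀ i, M i i = 0)
    (f : Fin n → (Fin n → Bool) → ℝ) (x : Fin n → Bool) :
    (1 / n) * ∑ i, |f i x| * |condProb (ising L) x i - condProb (ising M) x i|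
      ≤ specNorm (L - M) * Real.sqrt (∑ i, (f i x) ^ 2) / (2 * Real.sqrt n) :=
  stmt4_general L M hLsymm hLdiag hMsymm hMdiag f x
end

section
/- Consider the Curie-Weiss Glauber dynamics at β > 1 with the monotone coupling of two chains X̂_t ≥ Ŷ_t. Suppose at time t−1 the states x, y satisfy x ≥ y coordinatewise and m_i(x) ≥ m_i(y) ≥ s_1 for all i, where m_i(z) = (1/n)Σ_{j≠i} z^j and s_1 is chosen so that g(s) = tanh(βs) − s satisfies g'(s) ≤ −γ*/2 for s ≥ s_1. Then E[m(X̂_t) − m(Ŷ_t) | X̂_{t−1} = x, Ŷ_{t−1} = y] ≤ ρ (m(x) − m(y)), where ρ = 1 − γ*(n−1)/(2n²). -/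
/-! Write `D = m(x) - m(y) ≥ 0`. The forced resampling of the chosen coordinate moves `D` by
`-D/n` on average, while the heat-bath term adds `(1/n²) Σ_i [tanh(β m_i(x)) - tanh(β m_i(y))]`.
On `[s₁, 1]` the map `s ↦ tanh(βs) - s` has slope at most `-γ/2`, so by the mean value
inequality each summand is at most `(1 - γ/2)(m_i(x) - m_i(y))`, and these sum to
`(1 - γ/2)(n - 1) D`. Collecting terms gives `ρ D - D/n² ≤ ρ D`. -/

open Finset

/-- Average magnetization `m(x) = (1/n) Σ_i x^i`. -/
noncomputable def magAvg {n : ℕ} (x : Fin n → Bool) : ℝ := (∑ i, spin (x i)) / n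

/-- Leave-one-out magnetization `m_i(x) = (1/n) Σ_{j≠i} x^j`. -/
noncomputable def magAvgErase {n : ℕ} (x : Fin n → Bool) (i : Fin n) : ℝ :=
  (∑ j ∈ Finset.univ.erase i, spin (x j)) / n

/-- One-step expected difference of magnetizations of the two monotonically coupled
Curie-Weiss Glauber chains started at `x ≥ y`. -/
noncomputable def coupledStep {n : ℕ} (β : ℝ) (x y : Fin n → Bool) : ℝ :=
  magAvg x - magAvg y - (1 / (n : ℝ) ^ 2) * ∑ i, (spin (x i) - spin (y i))
    + (1 / (n : ℝ) ^ 2) * ∑ i,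
        (Real.tanh (β * magAvgErase x i) - Real.tanh (β * magAvgErase y i))

lemma differentiable_tanh : Differentiable ℝ Real.tanh := by
  rw [show Real.tanh = fun x => Real.sinh x / Real.cosh x from
    funext Real.tanh_eq_sinh_div_cosh]
  exact Real.differentiable_sinh.div Real.differentiable_cosh fun z => (Real.cosh_pos z).ne'

lemma tanh_mul_sub_tanh_mul_le {β C s t a b : ℝ}
    (hderiv : ∀ u, s ≤ u → u ≤ t → deriv (fun v : ℝ => Real.tanh (β * v) - v) u ≤ C)
    (ha : s ≤ a) (hab : a ≤ b) (hb : b ≤ t) :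
    Real.tanh (β * b) - Real.tanh (β * a) ≤ (1 + C) * (b - a) := by
  have hg : Differentiable ℝ (fun v : ℝ => Real.tanh (β * v) - v) := by
    have := differentiable_tanh
    fun_prop
  have := (convex_Icc s t).image_sub_le_mul_sub_of_deriv_le hg.continuous.continuousOn
    hg.differentiableOn (fun u hu => hderiv u (interior_subset hu).1 (interior_subset hu).2)
    a ⟨ha, hab.trans hb⟩ b ⟨ha.trans hab, hb⟩ hab
  linarith

lemma spin_le_one (b : Bool) : spin b ≤ 1 := by
  unfold spin; split <;> norm_num

lemma sum_spin_eq_mul_magAvg {n : ℕ} (hn : 0 < n) (z : Fin n → Bool) :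
    ∑ i, spin (z i) = n * magAvg z := by
  rw [magAvg, mul_div_cancel₀ _ (by positivity)]

lemma magAvg_le_magAvg {n : ℕ} {x y : Fin n → Bool} (hxy : ∀ i, spin (y i) ≤ spin (x i)) :
    magAvg y ≤ magAvg x :=
  div_le_div_of_nonneg_right (sum_le_sum fun i _ => hxy i) n.cast_nonneg

lemma magAvgErase_le_magAvgErase {n : ℕ} {x y : Fin n → Bool}
    (hxy : ∀ i, spin (y i) ≤ spin (x i)) (i : Fin n) :
    magAvgErase y i ≤ magAvgErase x i :=
  div_le_div_of_nonneg_right (sum_le_sum fun j _ => hxy j) n.cast_nonneg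

lemma magAvgErase_le_one {n : ℕ} (z : Fin n → Bool) (i : Fin n) : magAvgErase z i ≤ 1 := by
  refine div_le_one_of_le₀ ?_ n.cast_nonneg
  calc ∑ j ∈ univ.erase i, spin (z j) ≤ ∑ _j ∈ univ.erase i, (1 : ℝ) :=
        sum_le_sum fun j _ => spin_le_one (z j)
    _ ≤ n := by simp

lemma sum_magAvgErase {n : ℕ} (z : Fin n → Bool) :
    ∑ i, magAvgErase z i = ((n : ℝ) - 1) * magAvg z := by
  simp only [magAvgErase, magAvg, ← sum_div, sum_erase_eq_sub (mem_univ _), sum_sub_distrib,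
    sum_const, card_univ, Fintype.card_fin, nsmul_eq_mul]
  ring

lemma sum_tanh_sub_tanh_le {n : ℕ} {β C s : ℝ}
    (hderiv : ∀ u, s ≤ u → u ≤ 1 → deriv (fun v : ℝ => Real.tanh (β * v) - v) u ≤ C)
    {x y : Fin n → Bool} (hxy : ∀ i, spin (y i) ≤ spin (x i)) (hs : ∀ i, s ≤ magAvgErase y i) :
    ∑ i, (Real.tanh (β * magAvgErase x i) - Real.tanh (β * magAvgErase y i))
      ≤ (1 + C) * (((n : ℝ) - 1) * (magAvg x - magAvg y)) :=
  calc ∑ i, (Real.tanh (β * magAvgErase x i) - Real.tanh (β * magAvgErase y i))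
      ≤ ∑ i, (1 + C) * (magAvgErase x i - magAvgErase y i) :=
        sum_le_sum fun i _ => tanh_mul_sub_tanh_mul_le hderiv (hs i)
          (magAvgErase_le_magAvgErase hxy i) (magAvgErase_le_one x i)
    _ = (1 + C) * (((n : ℝ) - 1) * (magAvg x - magAvg y)) := by
        rw [← mul_sum, sum_sub_distrib, sum_magAvgErase, sum_magAvgErase]; ring

theorem stmt18_general {n : ℕ} (hn : 2 ≤ n) (β γ s1 : ℝ)
    (hderiv : ∀ s : ℝ, s1 ≤ s → s ≤ 1 →
      deriv (fun u : ℝ => Real.tanh (β * u) - u) s ≤ -γ / 2)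
    (x y : Fin n → Bool) (hxy : ∀ i, spin (y i) ≤ spin (x i))
    (hs1 : ∀ i : Fin n, s1 ≤ magAvgErase y i) :
    coupledStep β x y ≤ (1 - γ * (n - 1) / (2 * (n : ℝ) ^ 2)) * (magAvg x - magAvg y) := by
  have hn0 : 0 < n := by omega
  set D := magAvg x - magAvg y
  have hD : 0 ≤ D := sub_nonneg.mpr (magAvg_le_magAvg hxy)
  have hspins : ∑ i, (spin (x i) - spin (y i)) = n * D := by
    rw [sum_sub_distrib, sum_spin_eq_mul_magAvg hn0, sum_spin_eq_mul_magAvg hn0]; ring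
  calc coupledStep β x y
      ≤ D - 1 / (n : ℝ) ^ 2 * (n * D) + 1 / (n : ℝ) ^ 2 * ((1 + -γ / 2) * ((n - 1) * D)) := by
        rw [coupledStep, hspins]
        gcongr
        exact sum_tanh_sub_tanh_le hderiv hxy hs1
    _ = (1 - γ * (n - 1) / (2 * (n : ℝ) ^ 2)) * D - D / (n : ℝ) ^ 2 := by
        field_simp; ring
    _ ≤ (1 - γ * (n - 1) / (2 * (n : ℝ) ^ 2)) * D := sub_le_self _ (by positivity)

theorem stmt18 {n : ℕ} (hn : 2 ≤ n) (β γ s1 : ℝ) (hβ : 1 < β) (hγ : 0 < γ)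
    (hderiv : ∀ s : ℝ, s1 ≤ s → s ≤ 1 →
      deriv (fun u : ℝ => Real.tanh (β * u) - u) s ≤ -γ / 2)
    (x y : Fin n → Bool) (hxy : ∀ i, spin (y i) ≤ spin (x i))
    (hs1 : ∀ i : Fin n, s1 ≤ magAvgErase y i) :
    coupledStep β x y ≤ (1 - γ * (n - 1) / (2 * (n : ℝ) ^ 2)) * (magAvg x - magAvg y) :=
  stmt18_general hn β γ s1 hderiv x y hxy hs1
end
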